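/- Let n ≥ 1 and let ψ_0, …, ψ_n be real-valued functions in L²(ℝ) with ∫_ℝ ψ_l ψ_m dλ = δ_{lm} for 0 ≤ l, m ≤ n, satisfying for some reals r_0, …, r_{n-1} > 0 and s_0, …, s_{n-1} (r_{-1} = 0, ψ_{-1} = 0) the recurrence λ ψ_l(λ) = r_l ψ_{l+1}(λ) + s_l ψ_l(λ) + r_{l-1} ψ_{l-1}(λ) for all λ ∈ ℝ and 0 ≤ l ≤ n-1. Define p_n(λ_1, …, λ_n) = (det{ψ_{j-1}(λ_k)}_{j,k=1}^n)² / n!. Then for every bounded differentiable φ : ℝ → ℝ with sup_{λ ∈ ℝ} |φ'(λ)| < ∞, the variance of N_n[φ] = Σ_{l=1}^n φ(λ_l) with respect to p_n satisfies Var{N_n[φ]} ≤ (r_{n-1})² · ( sup_{λ ∈ ℝ} |φ'(λ)| )². -/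

import Mathlib

/-! Expanding `det²` over pairs of permutations and integrating factor by factor (an
Andréief-type identity), orthonormality reduces the first two moments of `N_n[φ]` to traces of
the Gram matrices `T_f = (∫ f ψ_j ψ_k)_{j,k<n}`: the variance is `tr T_{φ²} - tr T_φ²`, which is
`½ ∬ (φ x - φ y)² K_n(x, y)²` for the kernel `K_n(x, y) = ∑_{j<n} ψ_j(x) ψ_j(y)`. By the
Christoffel–Darboux formula `(x - y) K_n(x, y) = r_{n-1} (ψ_n(x) ψ_{n-1}(y) - ψ_{n-1}(x) ψ_n(y))`
and `|φ x - φ y| ≤ sup |φ'| |x - y|`, the integrand is at most `r_{n-1}² sup |φ'|²` times a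
function whose double integral is `2 (1 - ⟨ψ_n, ψ_{n-1}⟩²) ≤ 2`. -/

open MeasureTheory

/-- The determinantal density `p_n(λ) = (det{ψ_{j-1}(λ_k)}_{j,k=1}^n)²/n!` built from the
functions `ψ_0, …, ψ_{n-1}`. -/
noncomputable def detDensity (n : ℕ) (ψ : Fin n → ℝ → ℝ) (lam : Fin n → ℝ) : ℝ :=
  (Matrix.of fun j k : Fin n => ψ j (lam k)).det ^ 2 / (n.factorial : ℝ)

open Finset Matrix Equiv

namespace Equiv.Perm

variable {ι : Type*} [Fintype ι] [DecidableEq ι] {σ : Perm ι}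

lemma eq_one_of_apply_eq_self_of_ne {a : ι} (h : ∀ i, i ≠ a → σ i = i) : σ = 1 := by
  refine card_support_le_one.mp ((card_le_card fun i hi => ?_).trans (card_singleton a).le)
  exact mem_singleton.mpr (not_imp_comm.mp (h i) (mem_support.mp hi))

lemma eq_one_or_eq_swap_of_apply_eq_self {a b : ι} (h : ∀ i, i ≠ a → i ≠ b → σ i = i) :
    σ = 1 ∨ σ = swap a b := by
  have hσa : σ a = a ∨ σ a = b := by
    by_contra! hne
    exact hne.1 (σ.injective (h _ hne.1 hne.2))
  rcases hσa with hσa | hσa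
  · refine .inl (eq_one_of_apply_eq_self_of_ne (a := b) fun i hib => ?_)
    by_cases hia : i = a
    · exact hia ▸ hσa
    · exact h i hia hib
  · refine .inr ((swap_inv a b).symm ▸ eq_inv_of_mul_eq_one_right
      (eq_one_of_apply_eq_self_of_ne (a := b) fun i hib => ?_))
    by_cases hia : i = a
    · simp [hia, hσa]
    · simp [h i hia hib, swap_apply_of_ne_of_ne hia hib]

end Equiv.Perm

namespace Matrix

variable {ι R : Type*} [Fintype ι] [DecidableEq ι] [CommRing R]

lemma det_eq_sum_of_rows_eq_one (M : Matrix ι ι R) {S : Finset ι}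
    (hM : ∀ i ∉ S, M i = (1 : Matrix ι ι R) i) (P : Finset (Perm ι))
    (hP : ∀ σ : Perm ι, (∀ i ∉ S, σ i = i) → σ ∈ P) :
    M.det = ∑ σ ∈ P, Perm.sign σ • ∏ i, M i (σ i) := by
  rw [← det_transpose, det_apply]
  refine (sum_subset (subset_univ P) fun σ _ hσ => ?_).symm
  obtain ⟨i, hi, hσi⟩ : ∃ i ∉ S, σ i ≠ i := by
    by_contra! h
    exact hσ (hP σ h)
  rw [prod_eq_zero (mem_univ i) (by simp [hM i hi, hσi.symm]), smul_zero]

lemma det_eq_of_rows_eq_one (M : Matrix ι ι R) (a : ι)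
    (hM : ∀ i, i ≠ a → M i = (1 : Matrix ι ι R) i) : M.det = M a a := by
  rw [det_eq_sum_of_rows_eq_one M (S := {a}) (by simpa using hM) {1}
    fun σ hσ => mem_singleton.mpr (Perm.eq_one_of_apply_eq_self_of_ne (by simpa using hσ))]
  simp only [sum_singleton, Perm.sign_one, one_smul, Perm.one_apply]
  exact prod_eq_single a (fun i _ hi => by simp [hM i hi]) (by simp)

lemma det_eq_of_rows_eq_one_of_ne (M : Matrix ι ι R) {a b : ι} (hab : a ≠ b)
    (hM : ∀ i, i ≠ a → i ≠ b → M i = (1 : Matrix ι ι R) i) :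
    M.det = M a a * M b b - M a b * M b a := by
  have hne : (1 : Perm ι) ≠ Equiv.swap a b := fun h => hab (swap_eq_one_iff.mp h.symm)
  rw [det_eq_sum_of_rows_eq_one M (S := {a, b}) (by simpa using hM) {1, Equiv.swap a b}
    fun σ hσ => by simpa using Perm.eq_one_or_eq_swap_of_apply_eq_self (by simpa using hσ)]
  have hdiag : ∏ i, M i i = M a a * M b b :=
    prod_eq_mul a b hab (fun i _ hi => by simp [hM i hi.1 hi.2]) (by simp) (by simp)
  have hswap : ∏ i, M i (Equiv.swap a b i) = M a b * M b a := by
    rw [prod_eq_mul a b hab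
      (fun i _ hi => by simp [hM i hi.1 hi.2, swap_apply_of_ne_of_ne hi.1 hi.2])
      (by simp) (by simp), swap_apply_left, swap_apply_right]
  rw [sum_pair hne, Perm.sign_one, Perm.sign_swap hab]
  simp only [Perm.one_apply, one_smul, hdiag, hswap, Units.neg_smul, one_smul]
  ring

lemma prod_mul_det_sq (c : ι → R) (A : Matrix ι ι R) :
    (∏ k, c k) * A.det ^ 2 =
      ∑ σ : Perm ι, ∑ π : Perm ι, (Perm.sign π : R) * ∏ k, c k * (A (σ k) k * A (σ (π k)) k) := by
  rw [det_apply', sq, sum_mul_sum, mul_sum]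
  refine sum_congr rfl fun σ _ => ?_
  rw [← Equiv.sum_comp (Equiv.mulLeft σ), mul_sum]
  refine sum_congr rfl fun π _ => ?_
  have hsign : (Perm.sign σ : R) * Perm.sign (σ * π) = Perm.sign π := by
    simp [Perm.sign_mul, ← mul_assoc, ← Int.cast_mul, ← Units.val_mul]
  simp only [coe_mulLeft, Perm.mul_apply, prod_mul_distrib, ← hsign]
  ring

end Matrix

section PermutationSums

variable {ι : Type*} [Fintype ι]

lemma sum_sum_diag_mul_diag_sub_mul {R : Type*} [CommRing R] (T : Matrix ι ι R) :
    ∑ j, ∑ k, (T j j * T k k - T j k * T k j) = trace T ^ 2 - trace (T * T) := by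
  simp only [sum_sub_distrib, trace, diag_apply, mul_apply, sq, sum_mul_sum]

variable [DecidableEq ι]

lemma sum_sum_perm_apply {M : Type*} [AddCommMonoid M] (F : ι → M) :
    ∑ a, ∑ σ : Perm ι, F (σ a) = (Fintype.card ι).factorial • ∑ j, F j := by
  rw [sum_comm]
  simp only [Equiv.sum_comp _ F, sum_const, card_univ, Fintype.card_perm]

lemma sum_sum_sum_perm_apply {M : Type*} [AddCommMonoid M] (G : ι → ι → M) :
    ∑ a, ∑ b, ∑ σ : Perm ι, G (σ a) (σ b) = (Fintype.card ι).factorial • ∑ j, ∑ k, G j k := by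
  rw [← sum_sum_perm_apply fun j => ∑ k, G j k]
  refine sum_congr rfl fun a _ => (sum_comm).trans (sum_congr rfl fun σ _ => ?_)
  exact Equiv.sum_comp σ (G (σ a))

end PermutationSums

open scoped ENNReal

section UpdateOne

variable {ι α : Type*} [Fintype ι] [DecidableEq ι]

lemma prod_update_one_apply (f : α → ℝ) (a : ι) (x : ι → α) :
    ∏ k, Function.update (1 : ι → α → ℝ) a f k (x k) = f (x a) := by
  rw [prod_eq_single a (fun k _ hk => by simp [hk]) (by simp)]
  simp

lemma prod_update_update_one_apply (f g : α → ℝ) {a b : ι} (hab : a ≠ b) (x : ι → α) :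
    ∏ k, Function.update (Function.update (1 : ι → α → ℝ) a f) b g k (x k) = f (x a) * g (x b) := by
  rw [prod_eq_mul a b hab (fun k _ hk => by simp [hk.1, hk.2]) (by simp) (by simp)]
  simp [hab]

end UpdateOne

section WeightedGram

variable {ι α : Type*} [MeasurableSpace α] {μ : Measure α} {Ψ : ι → α → ℝ}

noncomputable def weightedGram (μ : Measure α) (Ψ : ι → α → ℝ) (f : α → ℝ) : Matrix ι ι ℝ :=
  of fun j k => ∫ t, f t * (Ψ j t * Ψ k t) ∂μ

lemma weightedGram_transpose (f : α → ℝ) : (weightedGram μ Ψ f)ᵀ = weightedGram μ Ψ f := by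
  ext j k
  simp only [transpose_apply, weightedGram, of_apply, mul_comm (Ψ j _)]

lemma integrable_mul_mul_of_memLp {f g h : α → ℝ} (hf : MemLp f ∞ μ) (hg : MemLp g 2 μ)
    (hh : MemLp h 2 μ) : Integrable (fun t => f t * (g t * h t)) μ :=
  hf.integrable_mul (memLp_one_iff_integrable.mpr (hg.integrable_mul hh))

lemma forall_memLp_update [DecidableEq ι] {p : ℝ≥0∞} {w : ι → α → ℝ}
    (hw : ∀ k, MemLp (w k) p μ) {f : α → ℝ} (hf : MemLp f p μ) (a : ι) :
    ∀ k, MemLp (Function.update w a f k) p μ :=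
  (Function.forall_update_iff w (p := fun _ g => MemLp g p μ)).mpr ⟨hf, fun k _ => hw k⟩

lemma forall_memLp_top_update_one [DecidableEq ι] {f : α → ℝ} (hf : MemLp f ∞ μ) (a : ι) :
    ∀ k, MemLp (Function.update (1 : ι → α → ℝ) a f k) ∞ μ :=
  forall_memLp_update (fun _ => memLp_top_const 1) hf a

end WeightedGram

section Andreief

variable {ι α : Type*} [Fintype ι] [DecidableEq ι] [MeasurableSpace α] {μ : Measure α}
  [SigmaFinite μ] {Ψ : ι → α → ℝ}

lemma integrable_prod_mul_det_sq (hΨ : ∀ j, MemLp (Ψ j) 2 μ) {w : ι → α → ℝ}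
    (hw : ∀ k, MemLp (w k) ∞ μ) :
    Integrable (fun x : ι → α => (∏ k, w k (x k)) * (of fun j k => Ψ j (x k)).det ^ 2)
      (Measure.pi fun _ => μ) := by
  simp only [prod_mul_det_sq, of_apply]
  refine integrable_finsetSum _ fun σ _ => integrable_finsetSum _ fun π _ => ?_
  exact (Integrable.fintype_prod fun k =>
    integrable_mul_mul_of_memLp (hw k) (hΨ (σ k)) (hΨ (σ (π k)))).const_mul _

lemma integral_prod_mul_det_sq (hΨ : ∀ j, MemLp (Ψ j) 2 μ) {w : ι → α → ℝ}
    (hw : ∀ k, MemLp (w k) ∞ μ) :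
    ∫ x, (∏ k, w k (x k)) * (of fun j k => Ψ j (x k)).det ^ 2 ∂(Measure.pi fun _ => μ) =
      ∑ σ : Perm ι, (of fun k l => weightedGram μ Ψ (w k) (σ k) (σ l)).det := by
  have hint : ∀ σ π : Perm ι, Integrable (fun x : ι → α =>
      ∏ k, w k (x k) * (Ψ (σ k) (x k) * Ψ (σ (π k)) (x k))) (Measure.pi fun _ => μ) :=
    fun σ π => Integrable.fintype_prod fun k =>
      integrable_mul_mul_of_memLp (hw k) (hΨ (σ k)) (hΨ (σ (π k)))
  simp only [prod_mul_det_sq, of_apply]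
  rw [integral_finsetSum _ fun σ _ => integrable_finsetSum _ fun π _ => (hint σ π).const_mul _]
  refine sum_congr rfl fun σ _ => ?_
  rw [integral_finsetSum _ fun π _ => (hint σ π).const_mul _, ← det_transpose, det_apply']
  refine sum_congr rfl fun π _ => ?_
  rw [integral_const_mul, integral_fintype_prod_eq_prod (f := fun k t =>
    w k t * (Ψ (σ k) t * Ψ (σ (π k)) t))]
  rfl

lemma integrable_apply_mul_det_sq (hΨ : ∀ j, MemLp (Ψ j) 2 μ) {f : α → ℝ} (hf : MemLp f ∞ μ)
    (a : ι) :
    Integrable (fun x : ι → α => f (x a) * (of fun j k => Ψ j (x k)).det ^ 2)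
      (Measure.pi fun _ => μ) := by
  simpa only [prod_update_one_apply] using
    integrable_prod_mul_det_sq hΨ (forall_memLp_top_update_one hf a)

lemma integrable_apply_mul_apply_mul_det_sq (hΨ : ∀ j, MemLp (Ψ j) 2 μ) {f g : α → ℝ}
    (hf : MemLp f ∞ μ) (hg : MemLp g ∞ μ) {a b : ι} (hab : a ≠ b) :
    Integrable (fun x : ι → α => f (x a) * g (x b) * (of fun j k => Ψ j (x k)).det ^ 2)
      (Measure.pi fun _ => μ) := by
  simpa only [prod_update_update_one_apply f g hab] using
    integrable_prod_mul_det_sq hΨ (w := Function.update (Function.update 1 a f) b g)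
      (forall_memLp_update (forall_memLp_top_update_one hf a) hg b)

lemma integral_apply_mul_det_sq (hΨ : ∀ j, MemLp (Ψ j) 2 μ) (horth : weightedGram μ Ψ 1 = 1)
    {f : α → ℝ} (hf : MemLp f ∞ μ) (a : ι) :
    ∫ x, f (x a) * (of fun j k => Ψ j (x k)).det ^ 2 ∂(Measure.pi fun _ => μ) =
      ∑ σ : Perm ι, weightedGram μ Ψ f (σ a) (σ a) := by
  have h := integral_prod_mul_det_sq hΨ (forall_memLp_top_update_one hf a)
  simp only [prod_update_one_apply] at h
  rw [h]
  refine sum_congr rfl fun σ _ => ?_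
  rw [det_eq_of_rows_eq_one _ a fun k hk => ?_]
  · simp
  · ext l
    simp [hk, horth, one_apply, σ.injective.eq_iff]

lemma integral_apply_mul_apply_mul_det_sq (hΨ : ∀ j, MemLp (Ψ j) 2 μ)
    (horth : weightedGram μ Ψ 1 = 1) {f g : α → ℝ} (hf : MemLp f ∞ μ) (hg : MemLp g ∞ μ)
    {a b : ι} (hab : a ≠ b) :
    ∫ x, f (x a) * g (x b) * (of fun j k => Ψ j (x k)).det ^ 2 ∂(Measure.pi fun _ => μ) =
      ∑ σ : Perm ι, (weightedGram μ Ψ f (σ a) (σ a) * weightedGram μ Ψ g (σ b) (σ b) -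
        weightedGram μ Ψ f (σ a) (σ b) * weightedGram μ Ψ g (σ b) (σ a)) := by
  have h := integral_prod_mul_det_sq hΨ (w := Function.update (Function.update 1 a f) b g)
    (forall_memLp_update (forall_memLp_top_update_one hf a) hg b)
  simp only [prod_update_update_one_apply f g hab] at h
  rw [h]
  refine sum_congr rfl fun σ _ => ?_
  rw [det_eq_of_rows_eq_one_of_ne _ hab fun k hka hkb => ?_]
  · simp [hab]
  · ext l
    simp [hka, hkb, horth, one_apply, σ.injective.eq_iff]

lemma integral_sum_erase_apply_mul_apply_mul_det_sq (hΨ : ∀ j, MemLp (Ψ j) 2 μ)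
    (horth : weightedGram μ Ψ 1 = 1) {f g : α → ℝ} (hf : MemLp f ∞ μ) (hg : MemLp g ∞ μ)
    (a : ι) :
    ∫ x, ∑ b ∈ univ.erase a, f (x a) * g (x b) * (of fun j k => Ψ j (x k)).det ^ 2
        ∂(Measure.pi fun _ => μ) =
      ∑ b, ∑ σ : Perm ι, (weightedGram μ Ψ f (σ a) (σ a) * weightedGram μ Ψ g (σ b) (σ b) -
        weightedGram μ Ψ f (σ a) (σ b) * weightedGram μ Ψ g (σ b) (σ a)) := by
  rw [integral_finsetSum _ fun b hb =>
    integrable_apply_mul_apply_mul_det_sq hΨ hf hg (ne_of_mem_erase hb).symm]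
  refine (sum_congr rfl fun b hb => ?_).trans (sum_erase _ (by simp))
  exact integral_apply_mul_apply_mul_det_sq hΨ horth hf hg (ne_of_mem_erase hb).symm

lemma integral_sum_apply_mul_det_sq (hΨ : ∀ j, MemLp (Ψ j) 2 μ)
    (horth : weightedGram μ Ψ 1 = 1) {f : α → ℝ} (hf : MemLp f ∞ μ) :
    ∫ x, (∑ l, f (x l)) * (of fun j k => Ψ j (x k)).det ^ 2 ∂(Measure.pi fun _ => μ) =
      (Fintype.card ι).factorial • trace (weightedGram μ Ψ f) := by
  simp only [sum_mul]
  rw [integral_finsetSum _ fun a _ => integrable_apply_mul_det_sq hΨ hf a]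
  simp only [integral_apply_mul_det_sq hΨ horth hf]
  exact sum_sum_perm_apply fun j => weightedGram μ Ψ f j j

lemma integral_sum_apply_sq_mul_det_sq (hΨ : ∀ j, MemLp (Ψ j) 2 μ)
    (horth : weightedGram μ Ψ 1 = 1) {f : α → ℝ} (hf : MemLp f ∞ μ) :
    ∫ x, (∑ l, f (x l)) ^ 2 * (of fun j k => Ψ j (x k)).det ^ 2 ∂(Measure.pi fun _ => μ) =
      (Fintype.card ι).factorial • (trace (weightedGram μ Ψ (f ^ 2)) +
        (trace (weightedGram μ Ψ f) ^ 2 - trace (weightedGram μ Ψ f * weightedGram μ Ψ f))) := by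
  have hf2 : MemLp (f ^ 2) ∞ μ := by simpa only [sq] using hf.mul hf
  have hsq : ∀ x : ι → α, (∑ l, f (x l)) ^ 2 =
      ∑ a, ((f ^ 2) (x a) + ∑ b ∈ univ.erase a, f (x a) * f (x b)) := fun x => by
    rw [sq, sum_mul_sum]
    refine sum_congr rfl fun a _ => ?_
    rw [Pi.pow_apply, sq]
    exact (add_sum_erase _ _ (mem_univ a)).symm
  have hoff : ∀ a, Integrable (fun x => ∑ b ∈ univ.erase a, f (x a) * f (x b) *
      (of fun j k => Ψ j (x k)).det ^ 2) (Measure.pi fun _ => μ) := fun a =>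
    integrable_finsetSum _ fun b hb =>
      integrable_apply_mul_apply_mul_det_sq hΨ hf hf (ne_of_mem_erase hb).symm
  have hterm : ∀ a, Integrable (fun x => (f ^ 2) (x a) * (of fun j k => Ψ j (x k)).det ^ 2 +
      ∑ b ∈ univ.erase a, f (x a) * f (x b) * (of fun j k => Ψ j (x k)).det ^ 2)
      (Measure.pi fun _ => μ) := fun a => (integrable_apply_mul_det_sq hΨ hf2 a).add (hoff a)
  simp only [hsq, sum_mul, add_mul]
  rw [integral_finsetSum _ fun a _ => hterm a]
  simp only [integral_add (integrable_apply_mul_det_sq hΨ hf2 _) (hoff _),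
    integral_apply_mul_det_sq hΨ horth hf2,
    integral_sum_erase_apply_mul_apply_mul_det_sq hΨ horth hf hf]
  rw [sum_add_distrib, sum_sum_perm_apply fun j => weightedGram μ Ψ (f ^ 2) j j,
    sum_sum_sum_perm_apply fun j k => weightedGram μ Ψ f j j * weightedGram μ Ψ f k k -
      weightedGram μ Ψ f j k * weightedGram μ Ψ f k j,
    sum_sum_diag_mul_diag_sub_mul, ← smul_add]
  rfl

end Andreief

lemma integral_sq_sub_sq_integral_detDensity {n : ℕ} {Ψ : Fin n → ℝ → ℝ}
    (hΨ : ∀ j, MemLp (Ψ j) 2) (horth : weightedGram volume Ψ 1 = 1) {f : ℝ → ℝ}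
    (hf : MemLp f ∞) :
    (∫ x, (∑ l, f (x l)) ^ 2 * detDensity n Ψ x) - (∫ x, (∑ l, f (x l)) * detDensity n Ψ x) ^ 2 =
      trace (weightedGram volume Ψ (f ^ 2)) -
        trace (weightedGram volume Ψ f * weightedGram volume Ψ f) := by
  simp only [detDensity, mul_div_assoc']
  rw [integral_div, integral_div, volume_pi, integral_sum_apply_sq_mul_det_sq hΨ horth hf,
    integral_sum_apply_mul_det_sq hΨ horth hf, Fintype.card_fin, nsmul_eq_mul, nsmul_eq_mul]
  have hfac : (n.factorial : ℝ) ≠ 0 := by positivity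
  field_simp
  ring

section DoubleIntegral

variable {α : Type*} [MeasurableSpace α] {μ : Measure α}

lemma integrable_prod_mul_add_mul_sub_two_mul {A B C : α → ℝ} (hA : Integrable A μ)
    (hB : Integrable B μ) (hC : Integrable C μ) :
    Integrable (fun p : α × α => A p.1 * B p.2 + B p.1 * A p.2 - 2 * (C p.1 * C p.2))
      (μ.prod μ) :=
  ((hA.mul_prod hB).add (hB.mul_prod hA)).sub ((hC.mul_prod hC).const_mul 2)

variable [SFinite μ]

lemma integral_prod_mul_add_mul_sub_two_mul {A B C : α → ℝ} (hA : Integrable A μ)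
    (hB : Integrable B μ) (hC : Integrable C μ) :
    ∫ p, (A p.1 * B p.2 + B p.1 * A p.2 - 2 * (C p.1 * C p.2)) ∂μ.prod μ =
      2 * ((∫ t, A t ∂μ) * (∫ t, B t ∂μ) - (∫ t, C t ∂μ) ^ 2) := by
  have hAB : Integrable (fun p : α × α => A p.1 * B p.2 + B p.1 * A p.2) (μ.prod μ) :=
    (hA.mul_prod hB).add (hB.mul_prod hA)
  rw [integral_sub hAB ((hC.mul_prod hC).const_mul 2),
    integral_add (hA.mul_prod hB) (hB.mul_prod hA), integral_const_mul, integral_prod_mul,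
    integral_prod_mul, integral_prod_mul]
  ring

lemma trace_sub_trace_mul_eq_half_integral {ι : Type*} [Fintype ι] [DecidableEq ι]
    {Ψ : ι → α → ℝ} (hΨ : ∀ j, MemLp (Ψ j) 2 μ) (horth : weightedGram μ Ψ 1 = 1) {f : α → ℝ}
    (hf : MemLp f ∞ μ) :
    trace (weightedGram μ Ψ (f ^ 2)) - trace (weightedGram μ Ψ f * weightedGram μ Ψ f) =
      2⁻¹ * ∫ p, (f p.1 - f p.2) ^ 2 * (∑ j, Ψ j p.1 * Ψ j p.2) ^ 2 ∂μ.prod μ := by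
  set T := weightedGram μ Ψ f
  have hf2 : MemLp (f ^ 2) ∞ μ := by simpa only [sq] using hf.mul hf
  have hA := fun j k => integrable_mul_mul_of_memLp hf2 (hΨ j) (hΨ k)
  have hB := fun j k => integrable_mul_mul_of_memLp (memLp_top_const 1) (hΨ j) (hΨ k)
  have hC := fun j k => integrable_mul_mul_of_memLp hf (hΨ j) (hΨ k)
  have hpt : ∀ p : α × α, (f p.1 - f p.2) ^ 2 * (∑ j, Ψ j p.1 * Ψ j p.2) ^ 2 =
      ∑ j, ∑ k, ((f ^ 2) p.1 * (Ψ j p.1 * Ψ k p.1) * (1 * (Ψ j p.2 * Ψ k p.2)) +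
        1 * (Ψ j p.1 * Ψ k p.1) * ((f ^ 2) p.2 * (Ψ j p.2 * Ψ k p.2)) -
        2 * (f p.1 * (Ψ j p.1 * Ψ k p.1) * (f p.2 * (Ψ j p.2 * Ψ k p.2)))) := fun p => by
    rw [sq (∑ j, _), sum_mul_sum, mul_sum]
    refine sum_congr rfl fun j _ => ?_
    rw [mul_sum]
    refine sum_congr rfl fun k _ => ?_
    simp only [Pi.pow_apply]
    ring
  have hB1 : ∀ j k, ∫ t, 1 * (Ψ j t * Ψ k t) ∂μ = (1 : Matrix ι ι ℝ) j k := fun j k =>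
    congr_fun₂ horth j k
  simp only [hpt]
  rw [integral_finsetSum _ fun j _ => integrable_finsetSum _ fun k _ =>
    integrable_prod_mul_add_mul_sub_two_mul (hA j k) (hB j k) (hC j k)]
  simp only [integral_finsetSum _ fun k _ =>
    integrable_prod_mul_add_mul_sub_two_mul (hA _ k) (hB _ k) (hC _ k),
    integral_prod_mul_add_mul_sub_two_mul (hA _ _) (hB _ _) (hC _ _), hB1]
  have hsymm : ∀ j k, T k j = T j k := fun j k => congr_fun₂ (weightedGram_transpose f) j k
  change _ = 2⁻¹ * ∑ j, ∑ k, 2 * (weightedGram μ Ψ (f ^ 2) j k * _ - T j k ^ 2)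
  simp only [← mul_sum, sum_sub_distrib, one_apply, mul_ite, mul_one, mul_zero, sum_ite_eq,
    mem_univ, if_true, trace, diag_apply, mul_apply, hsymm, sq]
  ring

end DoubleIntegral

section ChristoffelDarboux

variable {ψ : ℕ → ℝ → ℝ} {r s : ℕ → ℝ}

lemma christoffel_darboux {N : ℕ}
    (hrec : ∀ l < N, ∀ t : ℝ, t * ψ l t =
      r l * ψ (l + 1) t + s l * ψ l t + (if l = 0 then 0 else r (l - 1) * ψ (l - 1) t))
    (x y : ℝ) :
    (x - y) * ∑ j ∈ range N, ψ j x * ψ j y =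
      r (N - 1) * (ψ N x * ψ (N - 1) y - ψ (N - 1) x * ψ N y) := by
  -- At `N = 0` the truncated index `N - 1 = 0` turns the right side into `r 0 * 0`.
  induction N with
  | zero => simp
  | succ N ih =>
    have hx := hrec N N.lt_succ_self x
    have hy := hrec N N.lt_succ_self y
    rw [sum_range_succ, mul_add, ih fun l hl => hrec l (hl.trans N.lt_succ_self),
      Nat.add_sub_cancel]
    rcases eq_or_ne N 0 with rfl | hN
    · simp only [if_pos] at hx hy
      linear_combination ψ 0 y * hx - ψ 0 x * hy
    · rw [if_neg hN] at hx hy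
      linear_combination ψ N y * hx - ψ N x * hy

variable {μ : Measure ℝ} [SFinite μ] {n : ℕ}

lemma integral_sq_sub_mul_kernel_sq_le
    (hrec : ∀ l < n, ∀ t : ℝ, t * ψ l t =
      r l * ψ (l + 1) t + s l * ψ l t + (if l = 0 then 0 else r (l - 1) * ψ (l - 1) t))
    (hψ : MemLp (ψ n) 2 μ) (hψ' : MemLp (ψ (n - 1)) 2 μ)
    (hnorm : ∫ t, ψ n t ^ 2 ∂μ = 1) (hnorm' : ∫ t, ψ (n - 1) t ^ 2 ∂μ = 1)
    {φ : ℝ → ℝ} {L : ℝ} (hφ : ∀ x y, |φ x - φ y| ≤ L * |x - y|) :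
    ∫ p, (φ p.1 - φ p.2) ^ 2 * (∑ j : Fin n, ψ j p.1 * ψ j p.2) ^ 2 ∂μ.prod μ ≤
      2 * r (n - 1) ^ 2 * L ^ 2 := by
  set g := ψ n
  set h := ψ (n - 1)
  have hW : ∀ p : ℝ × ℝ, (g p.1 * h p.2 - h p.1 * g p.2) ^ 2 =
      g p.1 ^ 2 * h p.2 ^ 2 + h p.1 ^ 2 * g p.2 ^ 2 - 2 * (g p.1 * h p.1 * (g p.2 * h p.2)) :=
    fun p => by ring
  have hA := hψ.integrable_sq
  have hB := hψ'.integrable_sq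
  have hC : Integrable (fun t => g t * h t) μ := hψ.integrable_mul hψ'
  have hWi : Integrable (fun p : ℝ × ℝ => (g p.1 * h p.2 - h p.1 * g p.2) ^ 2) (μ.prod μ) := by
    simpa only [hW] using integrable_prod_mul_add_mul_sub_two_mul hA hB hC
  have hpt : ∀ p : ℝ × ℝ, (φ p.1 - φ p.2) ^ 2 * (∑ j : Fin n, ψ j p.1 * ψ j p.2) ^ 2 ≤
      (L * r (n - 1)) ^ 2 * (g p.1 * h p.2 - h p.1 * g p.2) ^ 2 := fun p => by
    have hcd := christoffel_darboux hrec p.1 p.2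
    rw [← Fin.sum_univ_eq_sum_range (fun j => ψ j p.1 * ψ j p.2)] at hcd
    calc (φ p.1 - φ p.2) ^ 2 * (∑ j : Fin n, ψ j p.1 * ψ j p.2) ^ 2
        = (|φ p.1 - φ p.2| * |∑ j : Fin n, ψ j p.1 * ψ j p.2|) ^ 2 := by
          rw [mul_pow, sq_abs, sq_abs]
      _ ≤ (L * |p.1 - p.2| * |∑ j : Fin n, ψ j p.1 * ψ j p.2|) ^ 2 := by
          gcongr
          exact hφ _ _
      _ = (L * r (n - 1)) ^ 2 * (g p.1 * h p.2 - h p.1 * g p.2) ^ 2 := by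
          rw [mul_assoc, ← abs_mul, hcd, mul_pow, sq_abs]
          ring
  calc ∫ p, (φ p.1 - φ p.2) ^ 2 * (∑ j : Fin n, ψ j p.1 * ψ j p.2) ^ 2 ∂μ.prod μ
      ≤ ∫ p, (L * r (n - 1)) ^ 2 * (g p.1 * h p.2 - h p.1 * g p.2) ^ 2 ∂μ.prod μ :=
        integral_mono_of_nonneg (ae_of_all _ fun p => by positivity) (hWi.const_mul _)
          (ae_of_all _ hpt)
    _ = (L * r (n - 1)) ^ 2 * (2 * (1 * 1 - (∫ t, g t * h t ∂μ) ^ 2)) := by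
        simp only [integral_const_mul, hW]
        rw [integral_prod_mul_add_mul_sub_two_mul hA hB hC, hnorm, hnorm']
    _ ≤ 2 * r (n - 1) ^ 2 * L ^ 2 := by
        nlinarith [mul_nonneg (sq_nonneg (L * r (n - 1))) (sq_nonneg (∫ t, g t * h t ∂μ))]

end ChristoffelDarboux

theorem variance_linear_statistic_bound_general (n : ℕ)
    (ψ : ℕ → ℝ → ℝ) (r s : ℕ → ℝ)
    (hL2 : ∀ l ≤ n, MemLp (ψ l) 2 (volume : Measure ℝ))
    (horth : ∀ l ≤ n, ∀ m ≤ n,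
      (∫ t : ℝ, ψ l t * ψ m t) = if l = m then (1 : ℝ) else 0)
    (hrec : ∀ l < n, ∀ t : ℝ, t * ψ l t =
      r l * ψ (l + 1) t + s l * ψ l t +
        (if l = 0 then 0 else r (l - 1) * ψ (l - 1) t))
    (φ : ℝ → ℝ) (hφdiff : Differentiable ℝ φ) (hφb : ∃ M : ℝ, ∀ t, |φ t| ≤ M)
    (hφd : BddAbove (Set.range fun t => |deriv φ t|)) :
    (∫ lam : Fin n → ℝ,
        (∑ l, φ (lam l)) ^ 2 * detDensity n (fun l : Fin n => ψ l) lam) -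
        (∫ lam : Fin n → ℝ,
          (∑ l, φ (lam l)) * detDensity n (fun l : Fin n => ψ l) lam) ^ 2 ≤
      (r (n - 1)) ^ 2 * (⨆ t : ℝ, |deriv φ t|) ^ 2 := by
  set Ψ : Fin n → ℝ → ℝ := fun l => ψ l
  set L := ⨆ t : ℝ, |deriv φ t|
  have hΨ : ∀ j, MemLp (Ψ j) 2 volume := fun j => hL2 j j.is_lt.le
  have horthΨ : weightedGram volume Ψ 1 = 1 := by
    ext j k
    simpa [weightedGram, one_apply, Fin.val_inj] using horth j j.is_lt.le k k.is_lt.le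
  have hnorm : ∀ l ≤ n, ∫ t, ψ l t ^ 2 = 1 := fun l hl => by
    simpa only [sq, if_pos] using horth l hl l hl
  obtain ⟨M, hM⟩ := hφb
  have hφ : MemLp φ ∞ volume :=
    memLp_top_of_bound hφdiff.continuous.aestronglyMeasurable M (ae_of_all _ hM)
  have hlip : ∀ x y, |φ x - φ y| ≤ L * |x - y| := fun x y => by
    simpa only [Real.norm_eq_abs] using Convex.norm_image_sub_le_of_norm_deriv_le
      (fun z _ => hφdiff z) (fun z _ => (Real.norm_eq_abs _).trans_le (le_ciSup hφd z))
      convex_univ (Set.mem_univ y) (Set.mem_univ x)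
  rw [integral_sq_sub_sq_integral_detDensity hΨ horthΨ hφ,
    trace_sub_trace_mul_eq_half_integral hΨ horthΨ hφ]
  calc _ ≤ 2⁻¹ * (2 * r (n - 1) ^ 2 * L ^ 2) := by
        gcongr
        exact integral_sq_sub_mul_kernel_sq_le hrec (hL2 n le_rfl) (hL2 _ (n.sub_le 1))
          (hnorm n le_rfl) (hnorm _ (n.sub_le 1)) hlip
    _ = r (n - 1) ^ 2 * L ^ 2 := by ring

/-- Variance bound: for orthonormal `ψ_0, …, ψ_n` in `L²(ℝ)` satisfying the three-term
recurrence, and a bounded differentiable test function `φ` with bounded derivative,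
`Var{Σ_l φ(λ_l)} ≤ r_{n-1}² (sup_λ |φ'(λ)|)²` with respect to `p_n`. -/
theorem variance_linear_statistic_bound (n : ℕ) (hn : 1 ≤ n)
    (ψ : ℕ → ℝ → ℝ) (r s : ℕ → ℝ)
    (hmeas : ∀ l ≤ n, Measurable (ψ l))
    (hL2 : ∀ l ≤ n, MemLp (ψ l) 2 (volume : Measure ℝ))
    (horth : ∀ l ≤ n, ∀ m ≤ n,
      (∫ t : ℝ, ψ l t * ψ m t) = if l = m then (1 : ℝ) else 0)
    (hr : ∀ l < n, 0 < r l)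
    (hrec : ∀ l < n, ∀ t : ℝ, t * ψ l t =
      r l * ψ (l + 1) t + s l * ψ l t +
        (if l = 0 then 0 else r (l - 1) * ψ (l - 1) t))
    (φ : ℝ → ℝ) (hφdiff : Differentiable ℝ φ) (hφb : ∃ M : ℝ, ∀ t, |φ t| ≤ M)
    (hφd : BddAbove (Set.range fun t => |deriv φ t|)) :
    (∫ lam : Fin n → ℝ,
        (∑ l, φ (lam l)) ^ 2 * detDensity n (fun l : Fin n => ψ l) lam) -
        (∫ lam : Fin n → ℝ,
          (∑ l, φ (lam l)) * detDensity n (fun l : Fin n => ψ l) lam) ^ 2 ≤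
      (r (n - 1)) ^ 2 * (⨆ t : ℝ, |deriv φ t|) ^ 2 :=
  variance_linear_statistic_bound_general n ψ r s hL2 horth hrec φ hφdiff hφb hφd
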